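/- Let φ: A^ω → ℝ be continuous and shift-deterministic with induced shift maps s[a] on K = φ(A^ω). Then for every infinite word a₁a₂a₃… ∈ A^ω, the diameter of s[a₁] ∘ s[a₂] ∘ … ∘ s[a_n](K) tends to 0 as n → ∞. -/
import Mathlib


open Filter Topology

/-- Concatenation of a finite word with an infinite word. -/
def wcat {A : Type*} (u : List A) (β : ℕ → A) : ℕ → A :=
  fun n => if h : n < u.length then u.get ⟨n, h⟩ else β (n - u.length)

/-- A payoff is shift-deterministic if `φ(β) = φ(γ)` implies `φ(aβ) = φ(aγ)`. -/
def ShiftDet {A : Type*} (φ : (ℕ → A) → ℝ) : Prop :=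
  ∀ (a : A) (β γ : ℕ → A), φ β = φ γ → φ (wcat [a] β) = φ (wcat [a] γ)

/-- Composition `s[a₁] ∘ s[a₂] ∘ … ∘ s[a_n]` of a family of maps along a finite word. -/
def wordComp {A : Type*} (s : A → ℝ → ℝ) : List A → ℝ → ℝ
  | [] => id
  | a :: t => s a ∘ wordComp s t

lemma wcat_nil {A : Type*} (β : ℕ → A) : wcat [] β = β := by
  funext n; simp [wcat]

lemma wcat_cons {A : Type*} (a : A) (t : List A) (β : ℕ → A) :
    wcat (a :: t) β = wcat [a] (wcat t β) := by
  funext n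
  cases n with
  | zero => simp [wcat]
  | succ n =>
    by_cases h : n < t.length
    · have h1 : n + 1 < (a :: t).length := by simp; omega
      have h2 : ¬ n + 1 < ([a] : List A).length := by simp
      simp [wcat, h, h1, h2]
    · have h1 : ¬ n + 1 < (a :: t).length := by simp; omega
      have h2 : ¬ n + 1 < ([a] : List A).length := by simp
      simp [wcat, h, h1, h2]

lemma wordComp_apply_phi {A : Type*} (φ : (ℕ → A) → ℝ) (s : A → ℝ → ℝ)
    (hs : ∀ (a : A) (β : ℕ → A), s a (φ β) = φ (wcat [a] β)) :
    ∀ (u : List A) (β : ℕ → A), wordComp s u (φ β) = φ (wcat u β)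
  | [], β => by simp [wordComp, wcat_nil]
  | a :: t, β => by
    simp only [wordComp, Function.comp_apply]
    rw [wordComp_apply_phi φ s hs t β, hs, ← wcat_cons]

/-- For a continuous shift-deterministic payoff with induced shift maps `s[a]` on
`K = φ(A^ω)`, the diameter of `s[a₁] ∘ … ∘ s[a_n](K)` tends to `0`. -/
theorem shift_comp_diam_tendsto_zero
    {A : Type*} [Fintype A] [Nonempty A] [TopologicalSpace A] [DiscreteTopology A]
    (φ : (ℕ → A) → ℝ) (hcont : Continuous φ) (hsd : ShiftDet φ)
    (s : A → ℝ → ℝ) (hs : ∀ (a : A) (β : ℕ → A), s a (φ β) = φ (wcat [a] β))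
    (α : ℕ → A) :
    Tendsto
      (fun n : ℕ =>
        Metric.diam (wordComp s (List.ofFn fun i : Fin n => α i) '' Set.range φ))
      atTop (𝓝 0) := by
  letI : MetricSpace (ℕ → A) := PiNat.metricSpace
  have hUC : UniformContinuous φ := CompactSpace.uniformContinuous_of_continuous hcont
  rw [Metric.tendsto_atTop]
  intro ε hε
  obtain ⟨δ, hδ, H⟩ := Metric.uniformContinuous_iff.1 hUC (ε / 2) (by linarith)
  obtain ⟨N, hN⟩ := exists_pow_lt_of_lt_one hδ (by norm_num : (1 / 2 : ℝ) < 1)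
  refine ⟨N, fun n hn => ?_⟩
  rw [Real.dist_eq, sub_zero, abs_of_nonneg Metric.diam_nonneg]
  have key : Metric.diam
      (wordComp s (List.ofFn fun i : Fin n => α i) '' Set.range φ) ≤ ε / 2 := by
    apply Metric.diam_le_of_forall_dist_le (by linarith)
    rintro x ⟨-, ⟨β, rfl⟩, rfl⟩ y ⟨-, ⟨γ, rfl⟩, rfl⟩
    rw [wordComp_apply_phi φ s hs, wordComp_apply_phi φ s hs]
    have hcyl : dist (wcat (List.ofFn fun i : Fin n => α i) β)
        (wcat (List.ofFn fun i : Fin n => α i) γ) ≤ (1 / 2 : ℝ) ^ n := by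
      rw [← PiNat.mem_cylinder_iff_dist_le]
      intro i hi
      have hi' : i < (List.ofFn fun i : Fin n => α i).length := by simpa using hi
      simp [wcat, hi', hi]
    have hlt : dist (wcat (List.ofFn fun i : Fin n => α i) β)
        (wcat (List.ofFn fun i : Fin n => α i) γ) < δ := by
      refine lt_of_le_of_lt (hcyl.trans ?_) hN
      exact pow_le_pow_of_le_one (by norm_num) (by norm_num) hn
    exact (H hlt).le
  linarith
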